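/- Let d, l, n, s be integers with d ≥ 1, l ≥ 0, d + l ≤ n, and 1 ≤ s ≤ ⌊(n−d−l)/(d+l+1)⌋, and set m = (n+1)s + n. For every A ⊆ [n] with |A| = d+l, letting Ã = A ∪ {n+1, n+2, …, 2n−(d+l)} ⊆ [m], one has |f_{s+1}(Ã) ∩ [n]| = d + l + s. -/
import Mathlib


/-- The point of the circular representation of `[N] = {1, …, N}` reached from the
point `x` after `t` clockwise steps. -/
def cpt (N x t : ℕ) : ℕ := (x - 1 + t) % N + 1

/-- The block of `len` clockwise-consecutive points of the circular representation
of `[N]` starting at the point `x`. -/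
def cblock (N x len : ℕ) : Finset ℕ := (Finset.range len).image (cpt N x)

/-- Data describing a candidate block structure on the circular representation of a
set `[N]`: the number `p` of blocks, the first (clockwise) element `b i` of the `i`-th
block `B i`, the length `lenB i` of `B i`, and the length `lenG i` of the gap `G i`
following `B i` clockwise (only the indices `i < p` are relevant). -/
structure CircData where
  p : ℕ
  b : ℕ → ℕ
  lenB : ℕ → ℕ
  lenG : ℕ → ℕ

/-- The `i`-th block `B i` of the data `S` on the circular representation of `[N]`. -/
def CircData.Blk (S : CircData) (N i : ℕ) : Finset ℕ := cblock N (S.b i) (S.lenB i)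

/-- The `i`-th gap `G i` of the data `S`, which follows the block `B i` clockwise. -/
def CircData.Gap (S : CircData) (N i : ℕ) : Finset ℕ :=
  cblock N (cpt N (S.b i) (S.lenB i)) (S.lenG i)

/-- `S` describes the block structure `B_1, G_1, B_2, G_2, …, B_p, G_p` of the set `A`
with respect to the density `δ` on the circular representation of `[N]`. -/
def IsBlockStructure (N : ℕ) (A : Finset ℕ) (δ : ℝ) (S : CircData) : Prop :=
  0 < S.p ∧
  -- each block is nonempty (it contains its first element `b i`)
  (∀ i < S.p, 0 < S.lenB i) ∧
  -- the blocks and gaps are arranged consecutively clockwise, cyclically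
  (∀ i, i + 1 < S.p → S.b (i + 1) = cpt N (S.b i) (S.lenB i + S.lenG i)) ∧
  S.b 0 = cpt N (S.b (S.p - 1)) (S.lenB (S.p - 1) + S.lenG (S.p - 1)) ∧
  -- the blocks and gaps form a partition of `[N]`
  ((Finset.range S.p).biUnion (fun i => S.Blk N i ∪ S.Gap N i) = Finset.Icc 1 N) ∧
  (∀ i < S.p, ∀ j < S.p, i ≠ j →
    Disjoint (S.Blk N i ∪ S.Gap N i) (S.Blk N j ∪ S.Gap N j)) ∧
  (∀ i < S.p, Disjoint (S.Blk N i) (S.Gap N i)) ∧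
  -- (i) the first (clockwise) element of each block belongs to `A`
  (∀ i < S.p, S.b i ∈ A) ∧
  -- (ii) the gaps are disjoint from `A`
  (∀ i < S.p, ∀ x ∈ S.Gap N i, x ∉ A) ∧
  -- (iii) `δ·|A ∩ B i| − 1 < |B i| ≤ δ·|A ∩ B i|`
  (∀ i < S.p, δ * ((A ∩ S.Blk N i).card : ℝ) - 1 < ((S.Blk N i).card : ℝ) ∧
    ((S.Blk N i).card : ℝ) ≤ δ * ((A ∩ S.Blk N i).card : ℝ)) ∧
  -- (iv) every proper initial segment `[b i, y] ⊊ B i` satisfies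
  -- `|[b i, y]| + 1 ≤ δ·|[b i, y] ∩ A|`
  (∀ i < S.p, ∀ t, 0 < t → t < S.lenB i →
    ((cblock N (S.b i) t).card : ℝ) + 1 ≤ δ * ((cblock N (S.b i) t ∩ A).card : ℝ))

/-- The union `𝒢_δ(A) = G_1 ∪ ⋯ ∪ G_p` of the gaps of the block structure `S`. -/
def CircData.gapsUnion (S : CircData) (N : ℕ) : Finset ℕ :=
  (Finset.range S.p).biUnion (S.Gap N)

/-- `f_δ(A) = A ∪ 𝒢_δ(A)`, computed from the block structure `S` of `A` on `[N]`. -/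
def fdelta (A : Finset ℕ) (S : CircData) (N : ℕ) : Finset ℕ := A ∪ S.gapsUnion N


lemma cpt_add (N x a b : ℕ) : cpt N (cpt N x a) b = cpt N x (a + b) := by
  unfold cpt
  rw [Nat.add_sub_cancel, Nat.mod_add_mod, Nat.add_assoc]

lemma cpt_one_le (N x t : ℕ) : 1 ≤ cpt N x t := by unfold cpt; omega

lemma cpt_le {N : ℕ} (hN : 0 < N) (x t : ℕ) : cpt N x t ≤ N := by
  unfold cpt; have := Nat.mod_lt (x - 1 + t) hN; omega

lemma cpt_mem {N : ℕ} (hN : 0 < N) (x t : ℕ) : cpt N x t ∈ Finset.Icc 1 N := by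
  simp [Finset.mem_Icc, cpt_one_le, cpt_le hN]

lemma cpt_zero {N x : ℕ} (h1 : 1 ≤ x) (h2 : x ≤ N) : cpt N x 0 = x := by
  unfold cpt; rw [Nat.add_zero, Nat.mod_eq_of_lt (by omega)]; omega

lemma cpt_of_add_le {N x t : ℕ} (h1 : 1 ≤ x) (h : x + t ≤ N) : cpt N x t = x + t := by
  unfold cpt; rw [Nat.mod_eq_of_lt (by omega)]; omega

lemma cpt_modeq {N x a b : ℕ} (h : cpt N x a = cpt N x b) : a % N = b % N := by
  unfold cpt at h
  have h2 : (x - 1 + a) % N = (x - 1 + b) % N := by omega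
  have h3 : x - 1 + a ≡ x - 1 + b [MOD N] := h2
  exact Nat.ModEq.add_left_cancel' (x - 1) h3

lemma cpt_mod (N x t : ℕ) : cpt N x (t % N) = cpt N x t := by
  unfold cpt
  have h : x - 1 + t % N ≡ x - 1 + t [MOD N] := (Nat.mod_modEq t N).add_left (x - 1)
  rw [h]

lemma cblock_card {N : ℕ} (hN : 0 < N) {x len : ℕ} (h : len ≤ N) :
    (cblock N x len).card = len := by
  rw [cblock, Finset.card_image_of_injOn, Finset.card_range]
  intro a ha b hb hab
  simp only [Finset.coe_range, Set.mem_Iio] at ha hb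
  have h2 := cpt_modeq hab
  rwa [Nat.mod_eq_of_lt (by omega), Nat.mod_eq_of_lt (by omega)] at h2

lemma cblock_eq_of_ge {N : ℕ} (hN : 0 < N) {x len : ℕ} (h : N ≤ len) :
    cblock N x len = cblock N x N := by
  apply Finset.Subset.antisymm
  · intro w hw
    simp only [cblock, Finset.mem_image, Finset.mem_range] at hw ⊢
    obtain ⟨k, hk, rfl⟩ := hw
    exact ⟨k % N, Nat.mod_lt _ hN, cpt_mod N x k⟩
  · exact Finset.image_subset_image (by simpa using Finset.range_subset_range.mpr h)

def Vsum (N s : ℕ) (T : Finset ℕ) (z len : ℕ) : ℤ :=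
  ∑ k ∈ Finset.range len, (if cpt N z k ∈ T then (s : ℤ) else -1)

lemma Vsum_zero (N s : ℕ) (T : Finset ℕ) (z : ℕ) : Vsum N s T z 0 = 0 := by simp [Vsum]

lemma Vsum_add (N s : ℕ) (T : Finset ℕ) (z a b : ℕ) :
    Vsum N s T z (a + b) = Vsum N s T z a + Vsum N s T (cpt N z a) b := by
  unfold Vsum
  rw [Finset.sum_range_add]
  congr 1
  exact Finset.sum_congr rfl fun k _ => by rw [cpt_add]

lemma Vsum_neg (N s : ℕ) (T : Finset ℕ) (z : ℕ) {len : ℕ}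
    (h : ∀ k < len, cpt N z k ∉ T) : Vsum N s T z len = -(len : ℤ) := by
  unfold Vsum
  rw [Finset.sum_congr rfl fun k hk => if_neg (h k (Finset.mem_range.mp hk))]
  simp

lemma Vsum_card {N : ℕ} (hN : 0 < N) (s : ℕ) (T : Finset ℕ) (z : ℕ) {len : ℕ}
    (h : len ≤ N) :
    Vsum N s T z len = (s + 1) * ((cblock N z len ∩ T).card : ℤ) - len := by
  classical
  have hinj : Set.InjOn (cpt N z) (Finset.range len) := by
    intro a ha b hb hab
    simp only [Finset.coe_range, Set.mem_Iio] at ha hb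
    have h2 := cpt_modeq hab
    rwa [Nat.mod_eq_of_lt (by omega), Nat.mod_eq_of_lt (by omega)] at h2
  have himg : cblock N z len ∩ T
      = Finset.image (cpt N z) ((Finset.range len).filter fun k => cpt N z k ∈ T) := by
    ext w
    simp only [cblock, Finset.mem_inter, Finset.mem_image, Finset.mem_filter,
      Finset.mem_range]
    constructor
    · rintro ⟨⟨k, hk, rfl⟩, hw⟩; exact ⟨k, ⟨hk, hw⟩, rfl⟩
    · rintro ⟨k, ⟨hk, hw⟩, rfl⟩; exact ⟨⟨k, hk, rfl⟩, hw⟩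
  have hcardeq : (cblock N z len ∩ T).card
      = ((Finset.range len).filter fun k => cpt N z k ∈ T).card := by
    rw [himg, Finset.card_image_of_injOn (hinj.mono (by
      intro a ha; simp only [Finset.coe_filter, Set.mem_setOf_eq,
        Finset.mem_range] at ha
      simp [ha.1]))]
  have hsplit := Finset.card_filter_add_card_filter_not
    (s := Finset.range len) (p := fun k => cpt N z k ∈ T)
  unfold Vsum
  rw [← Finset.sum_filter_add_sum_filter_not (Finset.range len)
    (fun k => cpt N z k ∈ T)]
  have h1 : ∑ k ∈ (Finset.range len).filter (fun k => cpt N z k ∈ T),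
      (if cpt N z k ∈ T then (s : ℤ) else -1)
      = ((Finset.range len).filter (fun k => cpt N z k ∈ T)).card * (s : ℤ) := by
    rw [Finset.sum_congr rfl fun k hk => if_pos (Finset.mem_filter.mp hk).2]
    simp [mul_comm]
  have h2 : ∑ k ∈ (Finset.range len).filter (fun k => ¬ cpt N z k ∈ T),
      (if cpt N z k ∈ T then (s : ℤ) else -1)
      = -((Finset.range len).filter (fun k => ¬ cpt N z k ∈ T)).card := by
    rw [Finset.sum_congr rfl fun k hk => if_neg (Finset.mem_filter.mp hk).2]
    simp
  rw [h1, h2, hcardeq]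
  rw [Finset.card_range] at hsplit
  have hsplit' : (((Finset.range len).filter (fun k => cpt N z k ∈ T)).card : ℤ)
      + (((Finset.range len).filter (fun k => ¬ cpt N z k ∈ T)).card : ℤ)
      = (len : ℤ) := by exact_mod_cast hsplit
  linear_combination -hsplit'

set_option maxHeartbeats 2000000 in
/-- part of Proposition 3.3 of the paper. Let `d ≥ 1`, `l ≥ 0`,
`d + l ≤ n`, `1 ≤ s ≤ ⌊(n−d−l)/(d+l+1)⌋` and `m = (n+1)s + n`. For every `A ⊆ [n]`
with `|A| = d + l`, letting `Ã = A ∪ {n+1, …, 2n−(d+l)} ⊆ [m]`, one has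
`|f_{s+1}(Ã) ∩ [n]| = d + l + s`. -/
theorem card_trimmed_fdelta (d l n s m : ℕ) (hd : 1 ≤ d) (hdl : d + l ≤ n)
    (hs1 : 1 ≤ s) (hs2 : s ≤ (n - d - l) / (d + l + 1))
    (hm : m = (n + 1) * s + n)
    (A : Finset ℕ) (hA : A ⊆ Finset.Icc 1 n) (hAcard : A.card = d + l)
    (S : CircData)
    (hS : IsBlockStructure m (A ∪ Finset.Icc (n + 1) (2 * n - (d + l))) ((s : ℝ) + 1) S) :
    (fdelta (A ∪ Finset.Icc (n + 1) (2 * n - (d + l))) S m ∩ Finset.Icc 1 n).card =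
      d + l + s := by
  classical
  obtain ⟨hp, hBpos, hnext, hwrap, hcover, hdisj, hBG, hbA, hgapA, hiii, hiv⟩ := hS
  set At : Finset ℕ := A ∪ Finset.Icc (n + 1) (2 * n - (d + l)) with hAt
  -- numeric preliminaries
  have hsn' : s * (d + l + 1) ≤ n - d - l := by
    have h := hs2; rwa [Nat.le_div_iff_mul_le (by omega)] at h
  have hsn'1 : d + l + 1 ≤ n - d - l := by
    have := Nat.mul_le_mul_right (d + l + 1) hs1
    omega
  obtain ⟨M, hM⟩ : ∃ M, M = (n + 1) * s := ⟨_, rfl⟩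
  have hMge : n + 1 ≤ M := by
    rw [hM]; exact Nat.le_mul_of_pos_right _ hs1
  have hmM : m = M + n := by rw [hm, hM]
  have hm0 : 0 < m := by omega
  obtain ⟨K, hK⟩ : ∃ K, K = (s + 1) * n := ⟨_, rfl⟩
  have hmsn : K + s = m := by rw [hK, hmM, hM]; ring
  have hK1 : n ≤ K := by rw [hK]; exact Nat.le_mul_of_pos_left n (by omega)
  -- facts about At
  have hItcard : (Finset.Icc (n + 1) (2 * n - (d + l))).card = n - (d + l) := by
    rw [Nat.card_Icc]; omega
  have hAI : Disjoint A (Finset.Icc (n + 1) (2 * n - (d + l))) := by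
    rw [Finset.disjoint_left]
    intro z hz hz'
    have h1 := hA hz
    simp only [Finset.mem_Icc] at h1 hz'
    omega
  have hAtcard : At.card = n := by
    rw [hAt, Finset.card_union_of_disjoint hAI, hAcard, hItcard]; omega
  have hAtsub : At ⊆ Finset.Icc 1 m := by
    intro z hz
    rw [hAt] at hz
    rcases Finset.mem_union.mp hz with h | h
    · have := hA h; simp only [Finset.mem_Icc] at this ⊢; omega
    · simp only [Finset.mem_Icc] at h ⊢; omega
  -- block cards
  have hacard : ∀ i < S.p, (S.Blk m i).card = (s + 1) * (At ∩ S.Blk m i).card := by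
    intro i hi
    obtain ⟨h1, h2⟩ := hiii i hi
    have h2' : (S.Blk m i).card ≤ (s + 1) * (At ∩ S.Blk m i).card := by
      have h3 : ((S.Blk m i).card : ℝ) ≤ (((s + 1) * (At ∩ S.Blk m i).card : ℕ) : ℝ) := by
        push_cast; linarith
      exact_mod_cast h3
    have h1' : (s + 1) * (At ∩ S.Blk m i).card ≤ (S.Blk m i).card := by
      have h3 : (((s + 1) * (At ∩ S.Blk m i).card : ℕ) : ℝ)
          < ((S.Blk m i).card : ℕ) + 1 := by
        push_cast; linarith
      exact_mod_cast Nat.lt_add_one_iff.mp (by exact_mod_cast h3)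
    omega
  have hale : ∀ i < S.p, (At ∩ S.Blk m i).card ≤ n := by
    intro i _
    calc (At ∩ S.Blk m i).card ≤ At.card := Finset.card_le_card Finset.inter_subset_left
    _ = n := hAtcard
  have hKle : ∀ i < S.p, (s + 1) * (At ∩ S.Blk m i).card ≤ K := by
    intro i hi
    rw [hK]; exact Nat.mul_le_mul_left _ (hale i hi)
  have hlenB : ∀ i < S.p, S.lenB i = (S.Blk m i).card ∧ S.lenB i < m := by
    intro i hi
    have hle : S.lenB i ≤ m := by
      by_contra hcon
      push_neg at hcon
      have hcard : (S.Blk m i).card = m := by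
        show (cblock m (S.b i) (S.lenB i)).card = m
        rw [cblock_eq_of_ge hm0 hcon.le, cblock_card hm0 le_rfl]
      have := hKle i hi
      rw [hacard i hi] at hcard
      omega
    have hcard : (S.Blk m i).card = S.lenB i := cblock_card hm0 hle
    refine ⟨hcard.symm, ?_⟩
    have := hKle i hi
    have h2 := hacard i hi
    omega
  -- partition cardinalities
  have hdisj' : ∀ i ∈ Finset.range S.p, ∀ j ∈ Finset.range S.p, i ≠ j →
      Disjoint (S.Blk m i ∪ S.Gap m i) (S.Blk m j ∪ S.Gap m j) := by
    intro i hi j hj hij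
    exact hdisj i (Finset.mem_range.mp hi) j (Finset.mem_range.mp hj) hij
  have hsuma : ∑ i ∈ Finset.range S.p, (At ∩ S.Blk m i).card = n := by
    have hadisj : ∀ i ∈ Finset.range S.p, ∀ j ∈ Finset.range S.p, i ≠ j →
        Disjoint (At ∩ S.Blk m i) (At ∩ S.Blk m j) := by
      intro i hi j hj hij
      exact (hdisj' i hi j hj hij).mono
        (Finset.inter_subset_right.trans Finset.subset_union_left)
        (Finset.inter_subset_right.trans Finset.subset_union_left)
    have hU : (Finset.range S.p).biUnion (fun i => At ∩ S.Blk m i) = At := by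
      apply Finset.Subset.antisymm
      · exact Finset.biUnion_subset.mpr fun i _ => Finset.inter_subset_left
      · intro z hz
        have hzm : z ∈ Finset.Icc 1 m := hAtsub hz
        rw [← hcover] at hzm
        obtain ⟨i, hi, hzi⟩ := Finset.mem_biUnion.mp hzm
        rcases Finset.mem_union.mp hzi with h | h
        · exact Finset.mem_biUnion.mpr ⟨i, hi, Finset.mem_inter.mpr ⟨hz, h⟩⟩
        · exact absurd hz (hgapA i (Finset.mem_range.mp hi) z h)
    rw [← Finset.card_biUnion hadisj, hU, hAtcard]
  have hsumB : ∑ i ∈ Finset.range S.p, (S.Blk m i).card = K := by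
    rw [Finset.sum_congr rfl fun i hi => hacard i (Finset.mem_range.mp hi),
      ← Finset.mul_sum, hsuma, hK]
  have hsumBG : ∑ i ∈ Finset.range S.p, ((S.Blk m i).card + (S.Gap m i).card) = m := by
    have hc1 : ∑ i ∈ Finset.range S.p, (S.Blk m i ∪ S.Gap m i).card = m := by
      rw [← Finset.card_biUnion hdisj', hcover, Nat.card_Icc]
      omega
    calc ∑ i ∈ Finset.range S.p, ((S.Blk m i).card + (S.Gap m i).card)
        = ∑ i ∈ Finset.range S.p, (S.Blk m i ∪ S.Gap m i).card :=
          Finset.sum_congr rfl fun i hi =>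
            (Finset.card_union_of_disjoint (hBG i (Finset.mem_range.mp hi))).symm
      _ = m := hc1
  have hsumG : ∑ i ∈ Finset.range S.p, (S.Gap m i).card = s := by
    rw [Finset.sum_add_distrib, hsumB] at hsumBG
    omega
  have hlenG : ∀ i < S.p, S.lenG i = (S.Gap m i).card ∧ S.lenG i ≤ s := by
    intro i hi
    have hGle : (S.Gap m i).card ≤ s := by
      rw [← hsumG]
      exact Finset.single_le_sum (f := fun j => (S.Gap m j).card)
        (fun j _ => Nat.zero_le _) (Finset.mem_range.mpr hi)
    have hsm : s < m := by omega
    have hle : S.lenG i ≤ m := by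
      by_contra hcon
      push_neg at hcon
      have hcard : (S.Gap m i).card = m := by
        show (cblock m _ (S.lenG i)).card = m
        rw [cblock_eq_of_ge hm0 hcon.le, cblock_card hm0 le_rfl]
      omega
    have hcard : (S.Gap m i).card = S.lenG i := cblock_card hm0 hle
    omega
  -- basic b facts
  have hbIcc : ∀ i < S.p, 1 ≤ S.b i ∧ S.b i ≤ m := by
    intro i hi
    have := hAtsub (hbA i hi)
    simpa [Finset.mem_Icc] using this
  -- V on blocks and gaps
  have hVB0 : ∀ i < S.p, Vsum m s At (S.b i) (S.lenB i) = 0 := by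
    intro i hi
    rw [Vsum_card hm0 s At (S.b i) (hlenB i hi).2.le]
    have h1 : cblock m (S.b i) (S.lenB i) = S.Blk m i := rfl
    rw [h1, Finset.inter_comm]
    have h2 : (S.lenB i : ℤ) = (s + 1) * ((At ∩ S.Blk m i).card : ℤ) := by
      exact_mod_cast congrArg (Nat.cast (R := ℤ)) ((hlenB i hi).1.trans (hacard i hi))
    rw [h2]; ring
  have hVGpart : ∀ i < S.p, ∀ u ≤ S.lenG i,
      Vsum m s At (cpt m (S.b i) (S.lenB i)) u = -(u : ℤ) := by
    intro i hi u hu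
    apply Vsum_neg
    intro k hk
    apply hgapA i hi
    exact Finset.mem_image.mpr ⟨k, Finset.mem_range.mpr (by omega), rfl⟩
  have hpre : ∀ i < S.p, ∀ u ≤ S.lenB i, 0 ≤ Vsum m s At (S.b i) u := by
    intro i hi u hu
    rcases Nat.eq_zero_or_pos u with rfl | hu0
    · rw [Vsum_zero]
    rcases eq_or_lt_of_le hu with rfl | hult
    · rw [hVB0 i hi]
    have h4 := hiv i hi u hu0 hult
    have hum : u ≤ m := le_trans hu (hlenB i hi).2.le
    rw [cblock_card hm0 hum] at h4
    have h4' : u + 1 ≤ (s + 1) * (cblock m (S.b i) u ∩ At).card := by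
      have h4'' : ((u + 1 : ℕ) : ℝ) ≤ (((s + 1) * (cblock m (S.b i) u ∩ At).card : ℕ) : ℝ) := by
        push_cast; linarith
      exact_mod_cast h4''
    rw [Vsum_card hm0 s At (S.b i) hum]
    have h5 : (u : ℤ) + 1 ≤ (s + 1) * ((cblock m (S.b i) u ∩ At).card : ℤ) := by
      exact_mod_cast h4'
    linarith
  -- cumulative positions
  set c : ℕ → ℕ := fun i => ∑ j ∈ Finset.range i, (S.lenB j + S.lenG j) with hcdef
  have hc0 : c 0 = 0 := by simp [hcdef]
  have hcsucc : ∀ i, c (i + 1) = c i + (S.lenB i + S.lenG i) := by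
    intro i; simp [hcdef, Finset.sum_range_succ]
  have hcmono : ∀ {i j : ℕ}, i ≤ j → c i ≤ c j := by
    intro i j hij
    exact Finset.sum_le_sum_of_subset (by simpa using Finset.range_subset_range.mpr hij)
  have hcp : c S.p = m := by
    show (∑ j ∈ Finset.range S.p, (S.lenB j + S.lenG j)) = m
    rw [Finset.sum_congr rfl fun i hi => by
      rw [(hlenB i (Finset.mem_range.mp hi)).1, (hlenG i (Finset.mem_range.mp hi)).1]]
    exact hsumBG
  -- chain lemma
  have hchain : ∀ j, j < S.p → ∀ i, j ≤ i → i ≤ S.p →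
      cpt m (S.b j) (c i - c j) = (if i = S.p then S.b 0 else S.b i) ∧
      Vsum m s At (S.b j) (c i - c j) = -∑ k ∈ Finset.Ico j i, (S.lenG k : ℤ) := by
    intro j hj i
    induction i with
    | zero =>
      intro hji _
      have hj0 : j = 0 := by omega
      subst hj0
      rw [Nat.sub_self]
      constructor
      · rw [cpt_zero (hbIcc 0 hp).1 (hbIcc 0 hp).2, if_neg (by omega)]
      · rw [Vsum_zero]; simp
    | succ i ih =>
      intro hji hip
      rcases eq_or_lt_of_le hji with rfl | hlt
      · rw [Nat.sub_self]
        constructor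
        · rw [cpt_zero (hbIcc _ hj).1 (hbIcc _ hj).2, if_neg (by omega)]
        · rw [Vsum_zero]; simp
      have hji' : j ≤ i := by omega
      have hi' : i < S.p := by omega
      have hIH := ih hji' (by omega)
      have hcpti : cpt m (S.b j) (c i - c j) = S.b i := by
        rw [hIH.1, if_neg (by omega)]
      have hstep : c (i + 1) - c j = (c i - c j) + (S.lenB i + S.lenG i) := by
        have h1 := hcsucc i
        have h2 := hcmono hji'
        omega
      rw [hstep]
      constructor
      · rw [← cpt_add, hcpti]
        by_cases hip1 : i + 1 = S.p
        · rw [if_pos hip1, hwrap]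
          have hpe : S.p - 1 = i := by omega
          rw [hpe]
        · rw [if_neg hip1, hnext i (by omega)]
      · rw [Vsum_add, hcpti, Vsum_add, hIH.2, hVB0 i hi',
          hVGpart i hi' (S.lenG i) le_rfl, Finset.sum_Ico_succ_top hji']
        push_cast
        ring
  -- gaps lie in [1, n]
  have hGsub : ∀ i < S.p, ∀ x ∈ S.Gap m i, x ≤ n := by
    intro i hi x hx
    by_contra hxn
    push_neg at hxn
    obtain ⟨w, hw, hxw⟩ : ∃ w, w < S.lenG i ∧ cpt m (cpt m (S.b i) (S.lenB i)) w = x := by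
      simpa [CircData.Gap, cblock, Finset.mem_image, Finset.mem_range] using hx
    have hxAt : x ∉ At := hgapA i hi x hx
    have hxm : 1 ≤ x ∧ x ≤ m := by
      rw [← hxw]; exact ⟨cpt_one_le _ _ _, cpt_le hm0 _ _⟩
    have hx2n : 2 * n - (d + l) < x := by
      by_contra hcon
      push_neg at hcon
      exact hxAt (Finset.mem_union_right _ (Finset.mem_Icc.mpr ⟨by omega, hcon⟩))
    have hyAt : (n + 1) ∈ At :=
      Finset.mem_union_right _ (Finset.mem_Icc.mpr ⟨le_rfl, by omega⟩)
    have hym : (n + 1) ∈ Finset.Icc 1 m := Finset.mem_Icc.mpr ⟨by omega, by omega⟩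
    rw [← hcover] at hym
    obtain ⟨j, hjmem, hyj⟩ := Finset.mem_biUnion.mp hym
    have hj : j < S.p := Finset.mem_range.mp hjmem
    have hyBlk : (n + 1) ∈ S.Blk m j := by
      rcases Finset.mem_union.mp hyj with h | h
      · exact h
      · exact absurd hyAt (hgapA j hj (n + 1) h)
    obtain ⟨r, hr, hyr⟩ : ∃ r, r < S.lenB j ∧ cpt m (S.b j) r = n + 1 := by
      simpa [CircData.Blk, cblock, Finset.mem_image, Finset.mem_range] using hyBlk
    have hbj : cpt m (S.b 0) (c j) = S.b j := by
      have h := (hchain 0 hp j (Nat.zero_le _) hj.le).1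
      rw [hc0, Nat.sub_zero, if_neg (by omega)] at h
      exact h
    have hbi : cpt m (S.b 0) (c i) = S.b i := by
      have h := (hchain 0 hp i (Nat.zero_le _) hi.le).1
      rw [hc0, Nat.sub_zero, if_neg (by omega)] at h
      exact h
    set ty : ℕ := c j + r with hty_def
    set tx : ℕ := c i + S.lenB i + w with htx_def
    have hty : cpt m (S.b 0) ty = n + 1 := by
      rw [hty_def, ← cpt_add, hbj, hyr]
    have htx : cpt m (S.b 0) tx = x := by
      rw [htx_def, add_assoc, ← cpt_add, hbi, ← cpt_add, hxw]
    have htym : ty < m := by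
      have h1 := hcsucc j
      have h2 := hcmono (show j + 1 ≤ S.p from hj)
      rw [hcp] at h2
      omega
    have htxm : tx < m := by
      have h1 := hcsucc i
      have h2 := hcmono (show i + 1 ≤ S.p from hi)
      rw [hcp] at h2
      omega
    have hxcpt : cpt m (S.b 0) (ty + (x - (n + 1))) = x := by
      rw [← cpt_add, hty, cpt_of_add_le (by omega) (by omega)]
      omega
    have hmod := cpt_modeq (htx.trans hxcpt.symm)
    rw [Nat.mod_eq_of_lt htxm] at hmod
    -- positive bound
    have hVpos : 0 ≤ Vsum m s At (n + 1) (x - n) := by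
      rw [Vsum_card hm0 s At (n + 1) (by omega : x - n ≤ m)]
      have hsub : Finset.Icc (n + 1) (2 * n - (d + l)) ⊆ cblock m (n + 1) (x - n) ∩ At := by
        intro e he
        have he' := Finset.mem_Icc.mp he
        refine Finset.mem_inter.mpr ⟨?_, Finset.mem_union_right _ he⟩
        refine Finset.mem_image.mpr ⟨e - (n + 1), Finset.mem_range.mpr (by omega), ?_⟩
        rw [cpt_of_add_le (by omega) (by omega)]
        omega
      have hcard : n - d - l ≤ (cblock m (n + 1) (x - n) ∩ At).card := by
        have h6 := Finset.card_le_card hsub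
        rw [hItcard] at h6
        omega
      have hineq : x - n ≤ (s + 1) * (cblock m (n + 1) (x - n) ∩ At).card := by
        have h1 : (n + 1) * s ≤ (s + 1) * (n - d - l) := by
          have e1 : (n - d - l) + (d + l + 1) = n + 1 := by omega
          calc (n + 1) * s = (n - d - l) * s + (d + l + 1) * s := by rw [← e1]; ring
            _ ≤ (n - d - l) * s + (n - d - l) := by
                have h7 : (d + l + 1) * s ≤ n - d - l := by rw [mul_comm]; exact hsn'
                omega
            _ = (s + 1) * (n - d - l) := by ring
        have h2 : (s + 1) * (n - d - l) ≤ (s + 1) * (cblock m (n + 1) (x - n) ∩ At).card :=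
          Nat.mul_le_mul_left _ hcard
        have h3 : x - n ≤ M := by omega
        rw [hM] at h3
        exact le_trans (le_trans h3 h1) h2
      have h8 : ((x - n : ℕ) : ℤ) ≤ (s + 1) * ((cblock m (n + 1) (x - n) ∩ At).card : ℤ) := by
        exact_mod_cast hineq
      linarith
    -- negative bound
    have hVneg : Vsum m s At (n + 1) (x - n) ≤ -1 := by
      have hsplit : Vsum m s At (S.b j) (r + (x - n))
          = Vsum m s At (S.b j) r + Vsum m s At (n + 1) (x - n) := by
        rw [Vsum_add, hyr]
      have hprej := hpre j hj r hr.le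
      have hGnonneg : ∀ (a b : ℕ), 0 ≤ ∑ k ∈ Finset.Ico a b, (S.lenG k : ℤ) :=
        fun a b => Finset.sum_nonneg fun k _ => by positivity
      rcases le_or_gt j i with hji | hij
      · -- case j ≤ i
        have htytx : ty ≤ tx := by
          rcases eq_or_lt_of_le hji with rfl | hlt
          · omega
          · have h1 := hcmono (show j + 1 ≤ i from hlt)
            have h2 := hcsucc j
            omega
        have hLeq : x - n = tx - ty + 1 := by
          rcases lt_or_ge (ty + (x - (n + 1))) m with hcase | hcase
          · rw [Nat.mod_eq_of_lt hcase] at hmod; omega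
          · rw [Nat.mod_eq_sub_mod hcase, Nat.mod_eq_of_lt (by omega)] at hmod
            omega
        have he : r + (x - n) = (c i - c j) + (S.lenB i + (w + 1)) := by
          have h9 := hcmono hji
          omega
        have hval : Vsum m s At (S.b j) (r + (x - n)) ≤ -1 := by
          rw [he, Vsum_add]
          have hch := hchain j hj i hji hi.le
          rw [hch.2, show cpt m (S.b j) (c i - c j) = S.b i from by
            rw [hch.1, if_neg (by omega)], Vsum_add, hVB0 i hi,
            hVGpart i hi (w + 1) (by omega)]
          have h10 := hGnonneg j i
          push_cast
          linarith
        linarith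
      · -- case i < j
        have htxty : tx + 1 ≤ ty := by
          have h1 := hcmono (show i + 1 ≤ j from hij)
          have h2 := hcsucc i
          omega
        have hLeq : x - n = (m - ty) + tx + 1 := by
          rcases lt_or_ge (ty + (x - (n + 1))) m with hcase | hcase
          · rw [Nat.mod_eq_of_lt hcase] at hmod; omega
          · rw [Nat.mod_eq_sub_mod hcase, Nat.mod_eq_of_lt (by omega)] at hmod
            omega
        have he : r + (x - n) = (c S.p - c j) + (c i + (S.lenB i + (w + 1))) := by
          have h1 := hcmono (show j ≤ S.p from hj.le)
          rw [hcp] at h1 ⊢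
          omega
        have hval : Vsum m s At (S.b j) (r + (x - n)) ≤ -1 := by
          rw [he, Vsum_add]
          have hch := hchain j hj S.p hj.le le_rfl
          rw [hch.2, show cpt m (S.b j) (c S.p - c j) = S.b 0 from by
            rw [hch.1, if_pos rfl], Vsum_add]
          have hch0 := hchain 0 hp i (Nat.zero_le _) hi.le
          rw [hc0, Nat.sub_zero] at hch0
          rw [hch0.2, show cpt m (S.b 0) (c i) = S.b i from by
            rw [hch0.1, if_neg (by omega)], Vsum_add, hVB0 i hi,
            hVGpart i hi (w + 1) (by omega)]
          have g1 := hGnonneg j S.p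
          have g2 := hGnonneg 0 i
          push_cast
          linarith
        linarith
    linarith
  -- final assembly
  have hGapdisj : ∀ i ∈ Finset.range S.p, ∀ j ∈ Finset.range S.p, i ≠ j →
      Disjoint (S.Gap m i) (S.Gap m j) := fun i hi j hj hij =>
    (hdisj' i hi j hj hij).mono Finset.subset_union_right Finset.subset_union_right
  have hGcard : (S.gapsUnion m).card = s := by
    rw [CircData.gapsUnion, Finset.card_biUnion hGapdisj, hsumG]
  have hGsub' : S.gapsUnion m ⊆ Finset.Icc 1 n := by
    intro z hz
    obtain ⟨i, hi, hzi⟩ := Finset.mem_biUnion.mp hz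
    have hi' := Finset.mem_range.mp hi
    refine Finset.mem_Icc.mpr ⟨?_, hGsub i hi' z hzi⟩
    obtain ⟨k, _, rfl⟩ := Finset.mem_image.mp hzi
    exact cpt_one_le _ _ _
  have hGA : ∀ z ∈ S.gapsUnion m, z ∉ At := by
    intro z hz
    obtain ⟨i, hi, hzi⟩ := Finset.mem_biUnion.mp hz
    exact hgapA i (Finset.mem_range.mp hi) z hzi
  have hmain : fdelta At S m ∩ Finset.Icc 1 n = A ∪ S.gapsUnion m := by
    ext z
    simp only [fdelta, hAt, Finset.mem_inter, Finset.mem_union, Finset.mem_Icc]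
    constructor
    · rintro ⟨(hz | hz) | hz, hz1, hz2⟩
      · exact Or.inl hz
      · omega
      · exact Or.inr hz
    · rintro (hz | hz)
      · have hz' := Finset.mem_Icc.mp (hA hz)
        exact ⟨Or.inl (Or.inl hz), hz'.1, hz'.2⟩
      · have hz' := Finset.mem_Icc.mp (hGsub' hz)
        exact ⟨Or.inr hz, hz'.1, hz'.2⟩
  rw [hmain, Finset.card_union_of_disjoint (Finset.disjoint_left.mpr fun z hzA hzG =>
    hGA z hzG (Finset.mem_union_left _ hzA)), hAcard, hGcard]
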